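/- arXiv:1508.06671 — 4 statements merged into one kernel-verified Lean document; each statement's English description precedes it below -/
import Mathlib

section
/- Let φ: [0,∞) → [0,∞) be a continuous non-decreasing function with φ(x) > 0 for all x > 0, φ(x) ≤ a·x + b for given non-negative constants a, b, and ∫₀₊ dx/φ(x) = +∞. Then for any γ ≥ 0 and ε ≥ 0, the backward differential equation u(t) = γ + ∫ₜ¹ (φ(u(s)) + ε) ds for 0 ≤ t ≤ 1 has a unique continuous solution u^{γ,ε} on [0,1]. -/
open MeasureTheory Set

/-- A continuous nonnegative solution on `[0,1]` of the backward integral equation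
`u t = γ + ∫ₜ¹ (φ (u s) + ε) ds`. -/
def IsSolODE (φ : ℝ → ℝ) (ε γ : ℝ) (u : ℝ → ℝ) : Prop :=
  ContinuousOn u (Set.Icc 0 1) ∧ (∀ t ∈ Set.Icc (0:ℝ) 1, 0 ≤ u t) ∧
    ∀ t ∈ Set.Icc (0:ℝ) 1, u t = γ + ∫ s in Set.Ioc t 1, (φ (u s) + ε)

/-- The Osgood condition `∫₀₊ dx / φ x = +∞`. -/
def OsgoodCondition (φ : ℝ → ℝ) : Prop :=
  ∀ δ > (0:ℝ), ∫⁻ x in Set.Ioc (0:ℝ) δ, ENNReal.ofReal (1 / φ x) = ⊤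

open Filter Topology

/-!
Separation of variables. Put `g = φ + ε`. If `g γ > 0`, then `g > 0` on `[γ, ∞)`; every solution
is non-increasing with `u 1 = γ`, so substituting `x = u s` gives `∫_γ^{u t} dx / g x = 1 - t`.
The left side is strictly increasing in `u t`, which gives uniqueness, and it tends to `+∞` by the
linear growth of `φ`, so inverting it produces the solution.
If `g γ = 0`, then `γ = ε = 0` and `u ≡ 0` is a solution. A solution with `u t₀ > 0` decreases
continuously to `u 1 = 0`, and the same substitution bounds `∫_m^{u t₀} dx / φ x` by `1` for every
small `m > 0`, contradicting the Osgood condition.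
-/

theorem integral_inv_eq_sub_of_hasDerivAt {g v : ℝ → ℝ} {a b : ℝ} (hab : a ≤ b)
    (hv : ContinuousOn v (Icc a b)) (hderiv : ∀ t ∈ Ioo a b, HasDerivAt v (-g (v t)) t)
    (hg : ContinuousOn g (v '' Icc a b)) (hg0 : ∀ t ∈ Icc a b, g (v t) ≠ 0) :
    ∫ x in v b..v a, (g x)⁻¹ = b - a := by
  rw [← uIcc_of_le hab] at hv hg hg0
  have hcov := intervalIntegral.integral_comp_mul_deriv'' (f' := fun t => -g (v t))
    (g := fun x => (g x)⁻¹) hv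
    (by simpa [min_eq_left hab, max_eq_right hab] using
      fun t ht => (hderiv t ht).hasDerivWithinAt)
    (hg.comp hv (mapsTo_image v _)).neg
    (hg.inv₀ (by rintro _ ⟨t, ht, rfl⟩; exact hg0 t ht))
  have hminus :
      ∫ t in a..b, ((fun x => (g x)⁻¹) ∘ v) t * -g (v t) = ∫ _ in a..b, (-1 : ℝ) :=
    intervalIntegral.integral_congr fun t ht => by simp [inv_mul_cancel₀ (hg0 t ht)]
  rw [intervalIntegral.integral_symm, ← hcov, hminus]
  simp

theorem intervalIntegrable_inv_of_pos {g : ℝ → ℝ} {x₀ y : ℝ}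
    (hgc : ContinuousOn g (Ici x₀)) (hpos : ∀ x ≥ x₀, 0 < g x) (hy : x₀ ≤ y) :
    IntervalIntegrable (fun x => (g x)⁻¹) volume x₀ y :=
  ((hgc.mono Icc_subset_Ici_self).inv₀ fun x hx => (hpos x hx.1).ne').intervalIntegrable_of_Icc hy

theorem strictMonoOn_integral_inv {g : ℝ → ℝ} {x₀ : ℝ} (hgc : ContinuousOn g (Ici x₀))
    (hpos : ∀ x ≥ x₀, 0 < g x) :
    StrictMonoOn (fun y => ∫ x in x₀..y, (g x)⁻¹) (Ici x₀) := by
  intro y (hy : x₀ ≤ y) y' (hy' : x₀ ≤ y') hyy'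
  rw [← sub_pos, intervalIntegral.integral_interval_sub_left
    (intervalIntegrable_inv_of_pos hgc hpos hy')
    (intervalIntegrable_inv_of_pos hgc hpos hy)]
  exact intervalIntegral.intervalIntegral_pos_of_pos_on
    ((intervalIntegrable_inv_of_pos hgc hpos hy).symm.trans
      (intervalIntegrable_inv_of_pos hgc hpos hy'))
    (fun x hx => inv_pos.2 (hpos x (hy.trans hx.1.le))) hyy'

theorem tendsto_integral_inv_atTop_of_le_affine {g : ℝ → ℝ} {x₀ A B : ℝ} (hx₀ : 0 ≤ x₀)
    (hgc : ContinuousOn g (Ici x₀)) (hpos : ∀ x ≥ x₀, 0 < g x)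
    (hle : ∀ x ≥ x₀, g x ≤ A * x + B) :
    Tendsto (fun y => ∫ x in x₀..y, (g x)⁻¹) atTop atTop := by
  set K := |A| + |B| + 1
  have hK : 0 < K := by positivity
  have hlog : Tendsto (fun y => K⁻¹ * Real.log ((y + 1) / (x₀ + 1))) atTop atTop :=
    (Real.tendsto_log_atTop.comp ((tendsto_atTop_add_const_right _ 1 tendsto_id).atTop_div_const
      (by linarith))).const_mul_atTop (inv_pos.2 hK)
  refine tendsto_atTop_mono' _ ((eventually_ge_atTop x₀).mono fun y hy => ?_) hlog
  have hlin :
      ∫ x in x₀..y, K⁻¹ * (x + 1)⁻¹ = K⁻¹ * Real.log ((y + 1) / (x₀ + 1)) := by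
    rw [intervalIntegral.integral_const_mul, intervalIntegral.integral_comp_add_right
      (fun x => x⁻¹), integral_inv_of_pos (by linarith) (by linarith)]
  rw [← hlin]
  refine intervalIntegral.integral_mono_on hy ?_
    (intervalIntegrable_inv_of_pos hgc hpos hy) fun x hx => ?_
  · refine (continuousOn_const.mul ((continuousOn_id.add continuousOn_const).inv₀
      fun x hx => ?_)).intervalIntegrable_of_Icc hy
    simp only [Pi.add_apply, id]
    linarith [hx.1]
  · have hx0 : 0 ≤ x := hx₀.trans hx.1
    have hgK : g x ≤ K * (x + 1) := by
      have := hle x hx.1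
      nlinarith [le_abs_self A, le_abs_self B, abs_nonneg A, abs_nonneg B]
    rw [← mul_inv]
    exact inv_anti₀ (hpos x hx.1) hgK

theorem exists_forall_hasDerivAt_neg {G : ℝ → ℝ} (hGc : Continuous G)
    (hGpos : ∀ x, 0 < G x) (x₀ t₀ : ℝ)
    (htop : Tendsto (fun y => ∫ x in x₀..y, (G x)⁻¹) atTop atTop)
    (hbot : Tendsto (fun y => ∫ x in x₀..y, (G x)⁻¹) atBot atBot) :
    ∃ u : ℝ → ℝ, u t₀ = x₀ ∧ ∀ t, HasDerivAt u (-G (u t)) t := by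
  set F := fun y => ∫ x in x₀..y, (G x)⁻¹
  have hF : ∀ y, HasDerivAt F (G y)⁻¹ y := fun y =>
    ((hGc.inv₀ fun x => (hGpos x).ne').integral_hasStrictDerivAt x₀ y).hasDerivAt
  have hFmono : StrictMono F := strictMono_of_hasDerivAt_pos hF fun y => inv_pos.2 (hGpos y)
  let e := hFmono.orderIsoOfSurjective F
    ((continuous_iff_continuousAt.2 fun y => (hF y).continuousAt).surjective htop hbot)
  have he : ∀ z, HasDerivAt e.symm (G (e.symm z)) z := fun z => by
    simpa using (hF (e.symm z)).of_local_left_inverse e.symm.continuous.continuousAt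
      (inv_pos.2 (hGpos _)).ne' (Eventually.of_forall fun z => e.apply_symm_apply z)
  refine ⟨fun t => e.symm (t₀ - t), ?_, fun t => ?_⟩
  · show e.symm (t₀ - t₀) = x₀
    rw [sub_self, e.symm_apply_eq]
    exact intervalIntegral.integral_same.symm
  · exact (he (t₀ - t)).comp t ((hasDerivAt_id t).const_sub t₀) |>.congr_deriv (by simp)

theorem exists_forall_le_hasDerivAt_neg {g : ℝ → ℝ} {x₀ : ℝ}
    (hgc : ContinuousOn g (Ici x₀)) (hpos : ∀ x ≥ x₀, 0 < g x)
    (htop : Tendsto (fun y => ∫ x in x₀..y, (g x)⁻¹) atTop atTop) (t₀ : ℝ) :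
    ∃ u : ℝ → ℝ, u t₀ = x₀ ∧ ∀ t ≤ t₀, x₀ ≤ u t ∧ HasDerivAt u (-g (u t)) t := by
  -- Freezing `g` below `x₀` makes the primitive of `1 / G` affine there, hence onto `ℝ`.
  set G := fun x => g (max x x₀)
  have hGc : Continuous G :=
    hgc.comp_continuous (continuous_id.max continuous_const) fun x => le_max_right x x₀
  have hGpos : ∀ x, 0 < G x := fun x => hpos _ (le_max_right x x₀)
  have hGtop : Tendsto (fun y => ∫ x in x₀..y, (G x)⁻¹) atTop atTop := by
    refine htop.congr' ((eventually_ge_atTop x₀).mono fun y hy => ?_)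
    refine intervalIntegral.integral_congr fun x hx => ?_
    rw [uIcc_of_le hy] at hx
    simp [G, max_eq_left hx.1]
  have hGbot : Tendsto (fun y => ∫ x in x₀..y, (G x)⁻¹) atBot atBot := by
    have hlin : Tendsto (fun y => (y - x₀) * (g x₀)⁻¹) atBot atBot :=
      (tendsto_atBot_add_const_right _ (-x₀) tendsto_id).atBot_mul_const
        (inv_pos.2 (hpos x₀ le_rfl))
    refine hlin.congr' ((eventually_le_atBot x₀).mono fun y hy => ?_)
    rw [← smul_eq_mul, ← intervalIntegral.integral_const]
    refine intervalIntegral.integral_congr fun x hx => ?_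
    rw [uIcc_of_ge hy] at hx
    simp [G, max_eq_right hx.2]
  obtain ⟨u, hu₀, hu⟩ := exists_forall_hasDerivAt_neg hGc hGpos x₀ t₀ hGtop hGbot
  have hanti : Antitone u := antitone_of_hasDerivAt_nonpos hu fun t => neg_nonpos.2 (hGpos _).le
  refine ⟨u, hu₀, fun t ht => ?_⟩
  have hut : x₀ ≤ u t := hu₀ ▸ hanti ht
  refine ⟨hut, ?_⟩
  simpa [G, max_eq_left hut] using hu t

theorem OsgoodCondition.exists_lt_integral_inv {φ : ℝ → ℝ} (hφ : OsgoodCondition φ)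
    (hφc : ContinuousOn φ (Ioi 0)) (hφpos : ∀ x > (0:ℝ), 0 < φ x) {c : ℝ} (hc : 0 < c)
    (K : ℝ) : ∃ m ∈ Ioo 0 c, K < ∫ x in m..c, (φ x)⁻¹ := by
  by_contra! hbdd
  -- Otherwise `1 / φ` would be integrable on `(0, c]` as an improper integral.
  have hint : ∀ m ∈ Ioo 0 c, IntegrableOn (fun x => (φ x)⁻¹) (Icc m c) := fun m hm =>
    ((hφc.mono fun x hx => hm.1.trans_le hx.1).inv₀ fun x hx =>
      (hφpos x (hm.1.trans_le hx.1)).ne').integrableOn_Icc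
  have hlim : Tendsto (fun n : ℕ => c / (n + 2)) atTop (𝓝 0) :=
    tendsto_const_nhds.div_atTop (tendsto_atTop_add_const_right _ 2 tendsto_natCast_atTop_atTop)
  have hmem : ∀ n : ℕ, c / (n + 2) ∈ Ioo 0 c := fun n =>
    ⟨by positivity, div_lt_self hc (by linarith [n.cast_nonneg (α := ℝ)])⟩
  have hintegrable : IntegrableOn (fun x => (φ x)⁻¹) (Ioc 0 c) :=
    integrableOn_Ioc_of_intervalIntegral_norm_bounded_left (I := K)
      (fun n => (hint _ (hmem n)).mono_set Ioc_subset_Icc_self) hlim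
      (Eventually.of_forall fun n => ?_)
  · have hosg := hφ c hc
    simp only [one_div] at hosg
    exact (hosg ▸ hintegrable.lintegral_lt_top).false
  · rw [← intervalIntegral.integral_of_le (hmem n).2.le]
    refine (intervalIntegral.integral_congr fun x hx => ?_).le.trans (hbdd _ (hmem n))
    rw [uIcc_of_le (hmem n).2.le] at hx
    exact Real.norm_of_nonneg (inv_pos.2 (hφpos x ((hmem n).1.trans_le hx.1))).le

namespace IsSolODE

variable {φ : ℝ → ℝ} {ε γ : ℝ} {v : ℝ → ℝ}

theorem apply_one (hv : IsSolODE φ ε γ v) : v 1 = γ := by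
  simpa using hv.2.2 1 (right_mem_Icc.2 zero_le_one)

theorem continuousOn_integrand (hv : IsSolODE φ ε γ v) (hφc : ContinuousOn φ (Ici 0)) :
    ContinuousOn (fun s => φ (v s) + ε) (Icc 0 1) :=
  (hφc.comp hv.1 fun s hs => hv.2.1 s hs).add continuousOn_const

theorem hasDerivAt (hv : IsSolODE φ ε γ v) (hφc : ContinuousOn φ (Ici 0)) {t : ℝ}
    (ht : t ∈ Ioo 0 1) : HasDerivAt v (-(φ (v t) + ε)) t := by
  have hc := hv.continuousOn_integrand hφc
  have hint : HasDerivAt (fun t => γ + ∫ s in t..1, (φ (v s) + ε)) (-(φ (v t) + ε)) t :=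
    (intervalIntegral.integral_hasDerivAt_left
      ((hc.mono (Icc_subset_Icc ht.1.le le_rfl)).intervalIntegrable_of_Icc ht.2.le)
      ((hc.mono Ioo_subset_Icc_self).stronglyMeasurableAtFilter isOpen_Ioo t ht)
      (hc.continuousAt (Icc_mem_nhds ht.1 ht.2))).const_add γ
  refine hint.congr_of_eventuallyEq
    (eventually_of_mem (Ioo_mem_nhds ht.1 ht.2) fun s hs => ?_)
  dsimp only
  rw [hv.2.2 s (Ioo_subset_Icc_self hs), intervalIntegral.integral_of_le hs.2.le]

theorem antitoneOn (hv : IsSolODE φ ε γ v) (hφc : ContinuousOn φ (Ici 0))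
    (hφnn : ∀ x ≥ (0:ℝ), 0 ≤ φ x) (hε : 0 ≤ ε) : AntitoneOn v (Icc 0 1) := by
  refine antitoneOn_of_hasDerivWithinAt_nonpos (f' := fun t => -(φ (v t) + ε))
    (convex_Icc 0 1) hv.1 (fun t ht => ?_) fun t ht => ?_
  all_goals rw [interior_Icc] at ht
  · rw [interior_Icc]
    exact (hv.hasDerivAt hφc ht).hasDerivWithinAt
  · exact neg_nonpos.2 (add_nonneg (hφnn _ (hv.2.1 t (Ioo_subset_Icc_self ht))) hε)

theorem le_apply (hv : IsSolODE φ ε γ v) (hφc : ContinuousOn φ (Ici 0))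
    (hφnn : ∀ x ≥ (0:ℝ), 0 ≤ φ x) (hε : 0 ≤ ε) {t : ℝ} (ht : t ∈ Icc 0 1) :
    γ ≤ v t :=
  hv.apply_one ▸ hv.antitoneOn hφc hφnn hε ht (right_mem_Icc.2 zero_le_one) ht.2

theorem integral_inv_eq (hv : IsSolODE φ ε γ v) (hφc : ContinuousOn φ (Ici 0)) {s t : ℝ}
    (hs : 0 ≤ s) (hst : s ≤ t) (ht : t ≤ 1) (hpos : ∀ r ∈ Icc s t, 0 < φ (v r) + ε) :
    ∫ x in v t..v s, (φ x + ε)⁻¹ = t - s := by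
  have hsub : Icc s t ⊆ Icc 0 1 := Icc_subset_Icc hs ht
  refine integral_inv_eq_sub_of_hasDerivAt hst (hv.1.mono hsub)
    (fun r hr => hv.hasDerivAt hφc ⟨hs.trans_lt hr.1, hr.2.trans_le ht⟩)
    ((hφc.mono ?_).add continuousOn_const) fun r hr => (hpos r hr).ne'
  rintro _ ⟨r, hr, rfl⟩
  exact hv.2.1 r (hsub hr)

end IsSolODE

theorem isSolODE_of_hasDerivAt {φ : ℝ → ℝ} {ε γ : ℝ} {u : ℝ → ℝ} (hu₁ : u 1 = γ)
    (hnn : ∀ t ∈ Icc (0:ℝ) 1, 0 ≤ u t) (hφc : ContinuousOn φ (Ici 0))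
    (hu : ∀ t ∈ Icc (0:ℝ) 1, HasDerivAt u (-(φ (u t) + ε)) t) : IsSolODE φ ε γ u := by
  have huc : ContinuousOn u (Icc 0 1) := fun t ht => (hu t ht).continuousAt.continuousWithinAt
  refine ⟨huc, hnn, fun t ht => ?_⟩
  have hsub : uIcc t 1 ⊆ Icc 0 1 := by rw [uIcc_of_le ht.2]; exact Icc_subset_Icc ht.1 le_rfl
  have hftc := intervalIntegral.integral_eq_sub_of_hasDerivAt (fun r hr => hu r (hsub hr))
    (((hφc.comp huc fun r hr => hnn r hr).add continuousOn_const).neg.mono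
      hsub).intervalIntegrable
  rw [intervalIntegral.integral_neg, intervalIntegral.integral_of_le ht.2, hu₁] at hftc
  linarith

theorem IsSolODE.eqOn_zero {φ v : ℝ → ℝ} (hv : IsSolODE φ 0 0 v)
    (hφc : ContinuousOn φ (Ici 0)) (hφnn : ∀ x ≥ (0:ℝ), 0 ≤ φ x)
    (hφpos : ∀ x > (0:ℝ), 0 < φ x) (hφOsg : OsgoodCondition φ) : EqOn v 0 (Icc 0 1) := by
  intro t₀ ht₀
  by_contra hne
  have hvt₀ : 0 < v t₀ := (hv.2.1 t₀ ht₀).lt_of_ne' hne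
  obtain ⟨m, hm, hlt⟩ :=
    hφOsg.exists_lt_integral_inv (hφc.mono Ioi_subset_Ici_self) hφpos hvt₀ 1
  obtain ⟨τ, hτ, hvτ⟩ := intermediate_value_Icc' ht₀.2
    (hv.1.mono (Icc_subset_Icc ht₀.1 le_rfl)) ⟨hv.apply_one ▸ hm.1.le, hm.2.le⟩
  have hcov := hv.integral_inv_eq hφc ht₀.1 hτ.1 hτ.2 fun r hr => by
    have hmr : m ≤ v r := hvτ ▸ hv.antitoneOn hφc hφnn le_rfl
      ⟨ht₀.1.trans hr.1, hr.2.trans hτ.2⟩ ⟨ht₀.1.trans hτ.1, hτ.2⟩ hr.2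
    simpa using hφpos _ (hm.1.trans_le hmr)
  simp only [add_zero, hvτ] at hcov
  linarith [hτ.2, ht₀.1]

theorem exists_isSolODE {φ : ℝ → ℝ} {a b ε γ : ℝ} (hφc : ContinuousOn φ (Ici 0))
    (hγ : 0 ≤ γ) (hpos : ∀ x ≥ γ, 0 < φ x + ε) (hφgrow : ∀ x ≥ (0:ℝ), φ x ≤ a * x + b) :
    ∃ u, IsSolODE φ ε γ u := by
  have hgc : ContinuousOn (fun x => φ x + ε) (Ici γ) :=
    (hφc.mono (Ici_subset_Ici.2 hγ)).add continuousOn_const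
  obtain ⟨u, hu₁, hu⟩ := exists_forall_le_hasDerivAt_neg hgc hpos
    (tendsto_integral_inv_atTop_of_le_affine (A := a) (B := b + ε) hγ hgc hpos
      fun x hx => by linarith [hφgrow x (hγ.trans hx)]) 1
  exact ⟨u, isSolODE_of_hasDerivAt hu₁ (fun t ht => hγ.trans (hu t ht.2).1) hφc
    fun t ht => (hu t ht.2).2⟩

theorem IsSolODE.integral_inv_eq_one_sub {φ v : ℝ → ℝ} {ε γ : ℝ} (hv : IsSolODE φ ε γ v)
    (hφc : ContinuousOn φ (Ici 0)) (hφnn : ∀ x ≥ (0:ℝ), 0 ≤ φ x) (hε : 0 ≤ ε)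
    (hpos : ∀ x ≥ γ, 0 < φ x + ε) {t : ℝ} (ht : t ∈ Icc 0 1) :
    ∫ x in γ..v t, (φ x + ε)⁻¹ = 1 - t := by
  simpa [hv.apply_one] using hv.integral_inv_eq hφc ht.1 ht.2 le_rfl fun r hr =>
    hpos _ (hv.le_apply hφc hφnn hε ⟨ht.1.trans hr.1, hr.2⟩)

theorem IsSolODE.eqOn_of_pos {φ u v : ℝ → ℝ} {ε γ : ℝ} (hv : IsSolODE φ ε γ v)
    (hu : IsSolODE φ ε γ u) (hφc : ContinuousOn φ (Ici 0)) (hφnn : ∀ x ≥ (0:ℝ), 0 ≤ φ x)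
    (hε : 0 ≤ ε) (hpos : ∀ x ≥ γ, 0 < φ x + ε) : EqOn v u (Icc 0 1) := by
  intro t ht
  have hγ : 0 ≤ γ := hu.apply_one ▸ hu.2.1 1 (right_mem_Icc.2 zero_le_one)
  have hmono := strictMonoOn_integral_inv
    ((hφc.mono (Ici_subset_Ici.2 hγ)).add continuousOn_const) hpos
  exact hmono.injOn (hv.le_apply hφc hφnn hε ht) (hu.le_apply hφc hφnn hε ht)
    ((hv.integral_inv_eq_one_sub hφc hφnn hε hpos ht).trans
      (hu.integral_inv_eq_one_sub hφc hφnn hε hpos ht).symm)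

theorem stmt0_general (φ : ℝ → ℝ) (a b : ℝ)
    (hφc : ContinuousOn φ (Set.Ici 0))
    (hφnn : ∀ x ≥ (0:ℝ), 0 ≤ φ x) (hφpos : ∀ x > (0:ℝ), 0 < φ x)
    (hφgrow : ∀ x ≥ (0:ℝ), φ x ≤ a * x + b) (hφOsg : OsgoodCondition φ)
    (γ ε : ℝ) (hγ : 0 ≤ γ) (hε : 0 ≤ ε) :
    ∃ u : ℝ → ℝ, IsSolODE φ ε γ u ∧
      ∀ v : ℝ → ℝ, IsSolODE φ ε γ v → Set.EqOn v u (Set.Icc 0 1) := by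
  rcases (add_nonneg (hφnn γ hγ) hε).eq_or_lt with hzero | hγε
  · have hε0 : ε = 0 := by linarith [hφnn γ hγ]
    have hφγ : φ γ = 0 := by linarith
    obtain rfl : γ = 0 := by
      by_contra h
      exact (hφpos γ (hγ.lt_of_ne' h)).ne' hφγ
    subst hε0
    exact ⟨0, ⟨continuousOn_const, fun _ _ => le_rfl, fun t _ => by simp [hφγ]⟩,
      fun v hv => hv.eqOn_zero hφc hφnn hφpos hφOsg⟩
  · have hpos : ∀ x ≥ γ, 0 < φ x + ε := fun x hx => hx.eq_or_lt.elim (· ▸ hγε)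
      fun h => add_pos_of_pos_of_nonneg (hφpos x (hγ.trans_lt h)) hε
    obtain ⟨u, hu⟩ := exists_isSolODE hφc hγ hpos hφgrow
    exact ⟨u, hu, fun v hv => hv.eqOn_of_pos hu hφc hφnn hε hpos⟩

/-- existence and uniqueness of the solution of the backward
differential equation `u t = γ + ∫ₜ¹ (φ (u s) + ε) ds` on `[0,1]`, for a continuous
non-decreasing `φ : [0,∞) → [0,∞)`, positive on `(0,∞)`, of at most linear growth,
satisfying the Osgood condition. -/
theorem stmt0 (φ : ℝ → ℝ) (a b : ℝ) (ha : 0 ≤ a) (hb : 0 ≤ b)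
    (hφc : ContinuousOn φ (Set.Ici 0)) (hφm : MonotoneOn φ (Set.Ici 0))
    (hφnn : ∀ x ≥ (0:ℝ), 0 ≤ φ x) (hφpos : ∀ x > (0:ℝ), 0 < φ x)
    (hφgrow : ∀ x ≥ (0:ℝ), φ x ≤ a * x + b) (hφOsg : OsgoodCondition φ)
    (γ ε : ℝ) (hγ : 0 ≤ γ) (hε : 0 ≤ ε) :
    ∃ u : ℝ → ℝ, IsSolODE φ ε γ u ∧
      ∀ v : ℝ → ℝ, IsSolODE φ ε γ v → Set.EqOn v u (Set.Icc 0 1) :=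
  stmt0_general φ a b hφc hφnn hφpos hφgrow hφOsg γ ε hγ hε
end

section
/- Let φ: [0,∞) → [0,∞) be continuous, non-decreasing, positive on (0,∞), of at most linear growth, with ∫₀₊ dx/φ(x) = +∞. For γ, ε ≥ 0 let u^{γ,ε} denote the unique solution on [0,1] of u(t) = γ + ∫ₜ¹ (φ(u(s)) + ε) ds. Then for each fixed t ∈ [0,1], lim_{ε→0} lim_{γ→0} u^{γ,ε}(t) = 0. -/
open MeasureTheory Set Filter Topology

/-
Along a solution, `G (u t) + t` is constant whenever `G' = 1 / (φ + ε)`; hence the time a solution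
spends between the levels `c` and `δ` is `∫_c^δ dx / (φ x + ε)`, which cannot exceed `1`. By the
Osgood condition `∫_c^δ dx / φ x > 1` for some `c > 0`, and by continuity in `ε` also
`∫_c^δ dx / (φ x + ε) > 1` for small `ε`; so `u^{γ,ε}(t) < δ` once `γ ≤ c` and `ε` is small.
This gives the inner limit at `ε = 0` and the outer limit. For `ε > 0` the primitive `F` of
`1 / (φ + ε)` is finite and strictly increasing, and `F (u^{γ,ε} t) = F γ + 1 - t`, so
`u^{γ,ε}(t)` is continuous in `γ`.
-/

open intervalIntegral

theorem StrictMono.tendsto_of_tendsto_comp {α β γ : Type*} [LinearOrder β]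
    [TopologicalSpace β] [OrderTopology β] [LinearOrder γ] [TopologicalSpace γ] [OrderTopology γ]
    {F : β → γ} (hF : StrictMono F) {f : α → β} {l : Filter α} {y : β}
    (h : Tendsto (F ∘ f) l (𝓝 (F y))) : Tendsto f l (𝓝 y) := by
  rw [tendsto_order] at h ⊢
  refine ⟨fun a ha => ?_, fun a ha => ?_⟩
  · filter_upwards [h.1 (F a) (hF ha)] with x hx using hF.lt_iff_lt.1 hx
  · filter_upwards [h.2 (F a) (hF ha)] with x hx using hF.lt_iff_lt.1 hx

theorem tendsto_nhdsGE_zero_of_forall_lt {f : ℝ → ℝ} (hf0 : ∀ x ≥ 0, 0 ≤ f x)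
    (hf : ∀ δ > 0, ∃ η > 0, ∀ x ∈ Ico 0 η, f x < δ) : Tendsto f (𝓝[≥] 0) (𝓝 0) := by
  refine tendsto_order.2 ⟨fun a ha => ?_, fun δ hδ => ?_⟩
  · filter_upwards [self_mem_nhdsWithin] with x hx using ha.trans_le (hf0 x hx)
  · obtain ⟨η, hη, hfη⟩ := hf δ hδ
    filter_upwards [Ico_mem_nhdsGE hη] with x hx using hfη x hx

theorem exists_lt_intervalIntegral_of_lintegral_eq_top {f : ℝ → ℝ} {δ : ℝ} (hδ : 0 < δ)
    (hf : ContinuousOn f (Ioc 0 δ)) (hf0 : ∀ x ∈ Ioc 0 δ, 0 ≤ f x)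
    (htop : ∫⁻ x in Ioc 0 δ, ENNReal.ofReal (f x) = ⊤) (M : ℝ) :
    ∃ c ∈ Ioo 0 δ, M < ∫ x in c..δ, f x := by
  set c : ℕ → ℝ := fun n => δ / (n + 2)
  have hc : ∀ n, c n ∈ Ioo 0 δ := fun n =>
    ⟨by positivity, div_lt_self hδ (by linarith [n.cast_nonneg (α := ℝ)])⟩
  have hmono : Monotone fun n => Ioc (c n) δ := fun m n hmn =>
    Ioc_subset_Ioc_left (div_le_div_of_nonneg_left hδ.le (by positivity) (by gcongr))
  have hunion : ⋃ n, Ioc (c n) δ = Ioc 0 δ := by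
    refine (iUnion_subset fun n => Ioc_subset_Ioc_left (hc n).1.le).antisymm fun x hx => ?_
    obtain ⟨n, hn⟩ := exists_nat_gt (δ / x)
    refine mem_iUnion.2 ⟨n, ?_, hx.2⟩
    rw [div_lt_iff₀ hx.1] at hn
    rw [div_lt_iff₀ (by positivity)]
    nlinarith [hx.1]
  have hsup : ENNReal.ofReal M < ⨆ n, ∫⁻ x in Ioc (c n) δ, ENNReal.ofReal (f x) := by
    rw [← setLIntegral_iUnion_of_directed _ hmono.directed_le, hunion, htop]
    exact ENNReal.ofReal_lt_top
  obtain ⟨n, hn⟩ := lt_iSup_iff.1 hsup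
  refine ⟨c n, hc n, ?_⟩
  have hsub : Icc (c n) δ ⊆ Ioc 0 δ := Icc_subset_Ioc_iff (hc n).2.le |>.2 ⟨(hc n).1, le_rfl⟩
  have hnn : 0 ≤ᵐ[volume.restrict (Ioc (c n) δ)] f := by
    filter_upwards [ae_restrict_mem measurableSet_Ioc] with x hx
    exact hf0 x (hsub (Ioc_subset_Icc_self hx))
  rw [← ofReal_integral_eq_lintegral_ofReal
    (((hf.mono hsub).integrableOn_Icc).mono_set Ioc_subset_Icc_self) hnn,
    ← integral_of_le (hc n).2.le] at hn
  exact (ENNReal.ofReal_lt_ofReal_iff'.1 hn).1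

/-- `u` is asked to be continuous on all of `ℝ` so that the fundamental theorem of calculus applies
without one-sided bookkeeping; `IsSolODE.isBackwardSol` extends a solution constantly outside
`[0,1]`, and `φ` by `φ 0` on `(-∞, 0)`. -/
def IsBackwardSol (ψ : ℝ → ℝ) (ε γ : ℝ) (u : ℝ → ℝ) : Prop :=
  Continuous u ∧ ∀ t ∈ Icc (0:ℝ) 1, u t = γ + ∫ s in Ioc t 1, (ψ (u s) + ε)

theorem IsSolODE.isBackwardSol {φ : ℝ → ℝ} {ε γ : ℝ} {u : ℝ → ℝ} (h : IsSolODE φ ε γ u) :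
    IsBackwardSol (fun x => φ (max x 0)) ε γ
      (IccExtend zero_le_one ((Icc 0 1).domRestrict u)) := by
  have hext : ∀ s ∈ Icc (0:ℝ) 1, IccExtend zero_le_one ((Icc 0 1).domRestrict u) s = u s :=
    fun s hs => IccExtend_of_mem _ _ hs
  refine ⟨continuous_IccExtend_iff.2 h.1.domRestrict, fun t ht => ?_⟩
  rw [hext t ht, h.2.2 t ht]
  congr 1
  refine setIntegral_congr_fun measurableSet_Ioc fun s hs => ?_
  have hs' : s ∈ Icc (0:ℝ) 1 := ⟨ht.1.trans hs.1.le, hs.2⟩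
  simp only [hext s hs', max_eq_left (h.2.1 s hs')]

namespace IsBackwardSol

variable {ψ u : ℝ → ℝ} {ε γ : ℝ}

theorem eq_intervalIntegral (h : IsBackwardSol ψ ε γ u) {t : ℝ} (ht : t ∈ Icc (0:ℝ) 1) :
    u t = γ + ∫ s in t..1, (ψ (u s) + ε) := by
  rw [integral_of_le ht.2]
  exact h.2 t ht

theorem apply_one (h : IsBackwardSol ψ ε γ u) : u 1 = γ := by
  simpa using h.eq_intervalIntegral (right_mem_Icc.2 zero_le_one)

theorem hasDerivWithinAt (h : IsBackwardSol ψ ε γ u) (hψ : Continuous ψ) {s : ℝ}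
    (hs : s ∈ Icc (0:ℝ) 1) : HasDerivWithinAt u (-(ψ (u s) + ε)) (Icc 0 1) s := by
  have hint : Continuous fun x => ψ (u x) + ε := (hψ.comp h.1).add continuous_const
  have hd : HasDerivAt (fun s => γ - ∫ x in (1:ℝ)..s, (ψ (u x) + ε)) (-(ψ (u s) + ε)) s := by
    simpa using (hint.integral_hasStrictDerivAt 1 s).hasDerivAt.const_sub γ
  refine hd.hasDerivWithinAt.congr (fun s hs => ?_) ?_ <;>
    rw [h.eq_intervalIntegral (by assumption), integral_symm] <;> ring

theorem antitoneOn (h : IsBackwardSol ψ ε γ u) (hψ : Continuous ψ) (hψ0 : ∀ x, 0 ≤ ψ x)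
    (hε : 0 ≤ ε) : AntitoneOn u (Icc 0 1) :=
  antitoneOn_of_hasDerivWithinAt_nonpos (convex_Icc 0 1) h.1.continuousOn
    (fun _ hx => (h.hasDerivWithinAt hψ (interior_subset hx)).mono interior_subset)
    (fun x _ => by linarith [hψ0 (u x)])

theorem primitive_comp_add_eq (h : IsBackwardSol ψ ε γ u) (hψ : Continuous ψ) {G : ℝ → ℝ} {t c : ℝ}
    (ht : 0 ≤ t) (htc : t ≤ c) (hc : c ≤ 1)
    (hG : ∀ s ∈ Icc t c, HasDerivAt G (ψ (u s) + ε)⁻¹ (u s))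
    (hne : ∀ s ∈ Icc t c, ψ (u s) + ε ≠ 0) :
    G (u t) + t = G (u c) + c := by
  have hderiv : ∀ s ∈ Icc t c, HasDerivWithinAt (fun s => G (u s) + s) 0 (Icc t c) s := by
    intro s hs
    have hus := (h.hasDerivWithinAt hψ ⟨ht.trans hs.1, hs.2.trans hc⟩).mono
      (Icc_subset_Icc ht hc)
    have hsum := ((hG s hs).comp_hasDerivWithinAt s hus).add (hasDerivWithinAt_id s _)
    rwa [mul_neg, inv_mul_cancel₀ (hne s hs), neg_add_cancel] at hsum
  exact (constant_of_has_deriv_right_zero (fun s hs => (hderiv s hs).continuousWithinAt)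
    (fun s hs => (hderiv s (Ico_subset_Icc_self hs)).mono_of_mem_nhdsWithin
      (Icc_mem_nhdsGE_of_mem hs)) c (right_mem_Icc.2 htc)).symm

theorem integral_inv_add_le_one (h : IsBackwardSol ψ ε γ u) (hψ : Continuous ψ)
    (hψ0 : ∀ x, 0 ≤ ψ x) (hψpos : ∀ x > 0, 0 < ψ x) (hε : 0 ≤ ε) {t c δ : ℝ}
    (ht : t ∈ Icc (0:ℝ) 1) (hc : 0 < c) (hγc : γ ≤ c) (hcδ : c ≤ δ) (hδ : δ ≤ u t) :
    ∫ x in c..δ, (ψ x + ε)⁻¹ ≤ 1 := by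
  -- `ρ` agrees with `1 / (ψ + ε)` on `[c, ∞)` and is continuous on `ℝ`, so its primitive is
  -- differentiable at every level `u s ≥ c`.
  set ρ : ℝ → ℝ := fun x => (ψ (max x c) + ε)⁻¹
  have hden : ∀ x, 0 < ψ (max x c) + ε := fun x => by
    linarith [hψpos _ (hc.trans_le (le_max_right x c))]
  have hρ : Continuous ρ :=
    ((hψ.comp (continuous_id.max continuous_const)).add continuous_const).inv₀ fun x =>
      (hden x).ne'
  have hρ_of_le : ∀ x, c ≤ x → ρ x = (ψ x + ε)⁻¹ := fun x hx => by
    simp only [ρ, max_eq_left hx]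
  obtain ⟨b, hb, hub⟩ : ∃ b ∈ Icc t 1, u b = c :=
    intermediate_value_Icc' ht.2 h.1.continuousOn ⟨h.apply_one ▸ hγc, hcδ.trans hδ⟩
  have hcu : ∀ s ∈ Icc t b, c ≤ u s := fun s hs => hub ▸
    h.antitoneOn hψ hψ0 hε ⟨ht.1.trans hs.1, hs.2.trans hb.2⟩ ⟨ht.1.trans hb.1, hb.2⟩ hs.2
  have hcons := h.primitive_comp_add_eq hψ (G := fun y => ∫ x in c..y, ρ x) ht.1 hb.1 hb.2
    (fun s hs => hρ_of_le _ (hcu s hs) ▸ (hρ.integral_hasStrictDerivAt c (u s)).hasDerivAt)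
    fun s hs => (hψpos _ (hc.trans_le (hcu s hs))).trans_le (le_add_of_nonneg_right hε) |>.ne'
  simp only [hub, integral_same] at hcons
  calc ∫ x in c..δ, (ψ x + ε)⁻¹ = ∫ x in c..δ, ρ x :=
        integral_congr fun x hx => (hρ_of_le x (uIcc_of_le hcδ ▸ hx).1).symm
    _ ≤ ∫ x in c..u t, ρ x :=
        integral_mono_interval le_rfl hcδ hδ
          (Eventually.of_forall fun x => (inv_pos.2 (hden x)).le) (hρ.intervalIntegrable _ _)
    _ ≤ 1 := by linarith [ht.1, hb.2]

end IsBackwardSol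

theorem exists_pos_forall_isBackwardSol_lt {ψ : ℝ → ℝ} (hψ : Continuous ψ)
    (hψ0 : ∀ x, 0 ≤ ψ x) (hψpos : ∀ x > 0, 0 < ψ x) (hOsg : OsgoodCondition ψ) {δ : ℝ}
    (hδ : 0 < δ) :
    ∃ η > 0, ∀ γ ∈ Ico 0 η, ∀ ε ∈ Ico 0 η, ∀ u, IsBackwardSol ψ ε γ u →
      ∀ t ∈ Icc (0:ℝ) 1, u t < δ := by
  obtain ⟨c, hc, hI⟩ :=
    exists_lt_intervalIntegral_of_lintegral_eq_top (f := fun x => 1 / ψ x) hδ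
    (continuousOn_const.div hψ.continuousOn fun x hx => (hψpos x hx.1).ne')
    (fun x hx => (one_div_pos.2 (hψpos x hx.1)).le) (hOsg δ hδ) 1
  -- Replacing `x` by `max x c` and `ε` by `|ε|` makes the integrand continuous on `ℝ × ℝ`.
  have hden : ∀ e x, 0 < ψ (max x c) + |e| := fun e x =>
    add_pos_of_pos_of_nonneg (hψpos _ (hc.1.trans_le (le_max_right x c))) (abs_nonneg e)
  have hcont : Continuous fun e : ℝ => ∫ x in c..δ, (ψ (max x c) + |e|)⁻¹ :=
    continuous_parametric_intervalIntegral_of_continuous' (Continuous.inv₀ (by fun_prop)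
      fun p : ℝ × ℝ => (hden p.1 p.2).ne') c δ
  have hclamp : ∀ e ≥ 0, ∫ x in c..δ, (ψ (max x c) + |e|)⁻¹ = ∫ x in c..δ, (ψ x + e)⁻¹ :=
    fun e he => integral_congr fun x hx => by
      rw [max_eq_left (uIcc_of_le hc.2.le ▸ hx).1, abs_of_nonneg he]
  have h0 : 1 < ∫ x in c..δ, (ψ (max x c) + |0|)⁻¹ := by
    simpa only [hclamp 0 le_rfl, add_zero, one_div] using hI
  obtain ⟨η, hη, hη'⟩ :=
    Metric.eventually_nhds_iff.1 ((hcont.tendsto 0).eventually (lt_mem_nhds h0))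
  refine ⟨min η c, lt_min hη hc.1, fun γ hγ ε hε u hu t ht => ?_⟩
  by_contra! hle
  have hK := hu.integral_inv_add_le_one hψ hψ0 hψpos hε.1 ht hc.1
    (hγ.2.trans_le (min_le_right _ _)).le hc.2.le hle
  have hε' : dist ε 0 < η := by
    rw [Real.dist_eq, sub_zero, abs_of_nonneg hε.1]
    exact hε.2.trans_le (min_le_left _ _)
  linarith [hclamp ε hε.1 ▸ hη' hε']

theorem tendsto_isBackwardSol_of_pos {ψ : ℝ → ℝ} (hψ : Continuous ψ) (hψ0 : ∀ x, 0 ≤ ψ x)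
    {ε : ℝ} (hε : 0 < ε) {u : ℝ → ℝ → ℝ} (hu : ∀ γ ≥ 0, IsBackwardSol ψ ε γ (u γ)) {t : ℝ}
    (ht : t ∈ Icc (0:ℝ) 1) : Tendsto (fun γ => u γ t) (𝓝[≥] 0) (𝓝 (u 0 t)) := by
  have hpos : ∀ x, 0 < ψ x + ε := fun x => by linarith [hψ0 x]
  have hρ : Continuous fun x => (ψ x + ε)⁻¹ :=
    (hψ.add continuous_const).inv₀ fun x => (hpos x).ne'
  set F : ℝ → ℝ := fun y => ∫ x in (0:ℝ)..y, (ψ x + ε)⁻¹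
  have hF : ∀ y, HasDerivAt F (ψ y + ε)⁻¹ y := fun y =>
    (hρ.integral_hasStrictDerivAt 0 y).hasDerivAt
  have hFu : ∀ γ ≥ 0, F (u γ t) = F γ + 1 - t := fun γ hγ => by
    have := (hu γ hγ).primitive_comp_add_eq hψ ht.1 ht.2 le_rfl (fun s _ => hF _)
      fun s _ => (hpos _).ne'
    rw [(hu γ hγ).apply_one] at this
    linarith
  have hFmono : StrictMono F := strictMono_of_hasDerivAt_pos hF fun y => inv_pos.2 (hpos y)
  refine hFmono.tendsto_of_tendsto_comp ?_
  have hFc : Continuous F := continuous_iff_continuousAt.2 fun y => (hF y).continuousAt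
  rw [hFu 0 le_rfl]
  refine ((((hFc.tendsto 0).add_const 1).sub_const t).mono_left nhdsWithin_le_nhds).congr' ?_
  filter_upwards [self_mem_nhdsWithin] with γ hγ using (hFu γ hγ).symm

theorem OsgoodCondition.comp_max_zero {φ : ℝ → ℝ} (h : OsgoodCondition φ) :
    OsgoodCondition fun x => φ (max x 0) := fun δ hδ => by
  rw [← h δ hδ]
  exact setLIntegral_congr_fun measurableSet_Ioc fun x hx => by simp only [max_eq_left hx.1.le]

theorem continuous_comp_max_zero {φ : ℝ → ℝ} (hφc : ContinuousOn φ (Ici 0)) :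
    Continuous fun x => φ (max x 0) :=
  hφc.comp_continuous (continuous_id.max continuous_const) fun x => le_max_right x 0

theorem exists_pos_forall_isSolODE_lt {φ : ℝ → ℝ} (hφc : ContinuousOn φ (Ici 0))
    (hφnn : ∀ x ≥ 0, 0 ≤ φ x) (hφpos : ∀ x > 0, 0 < φ x) (hφOsg : OsgoodCondition φ) {δ : ℝ}
    (hδ : 0 < δ) :
    ∃ η > 0, ∀ γ ∈ Ico 0 η, ∀ ε ∈ Ico 0 η, ∀ u, IsSolODE φ ε γ u → ∀ t ∈ Icc (0:ℝ) 1, u t < δ := by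
  obtain ⟨η, hη, H⟩ := exists_pos_forall_isBackwardSol_lt (continuous_comp_max_zero hφc)
    (fun x => hφnn _ (le_max_right x 0)) (fun x hx => (max_eq_left hx.le).symm ▸ hφpos x hx)
    hφOsg.comp_max_zero hδ
  refine ⟨η, hη, fun γ hγ ε hε u hu t ht => ?_⟩
  have h := H γ hγ ε hε _ hu.isBackwardSol t ht
  rwa [IccExtend_of_mem _ _ ht] at h

theorem tendsto_isSolODE_of_pos {φ : ℝ → ℝ} (hφc : ContinuousOn φ (Ici 0))
    (hφnn : ∀ x ≥ 0, 0 ≤ φ x) {ε : ℝ} (hε : 0 < ε) {u : ℝ → ℝ → ℝ}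
    (hu : ∀ γ ≥ 0, IsSolODE φ ε γ (u γ)) {t : ℝ} (ht : t ∈ Icc (0:ℝ) 1) :
    Tendsto (fun γ => u γ t) (𝓝[≥] 0) (𝓝 (u 0 t)) := by
  have h := tendsto_isBackwardSol_of_pos (continuous_comp_max_zero hφc)
    (fun x => hφnn _ (le_max_right x 0)) hε (fun γ hγ => (hu γ hγ).isBackwardSol) ht
  simp only [IccExtend_of_mem _ _ ht] at h
  exact h

theorem stmt1_general (φ : ℝ → ℝ)
    (hφc : ContinuousOn φ (Set.Ici 0))
    (hφnn : ∀ x ≥ (0:ℝ), 0 ≤ φ x) (hφpos : ∀ x > (0:ℝ), 0 < φ x)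
    (hφOsg : OsgoodCondition φ)
    (u : ℝ → ℝ → ℝ → ℝ) (hu : ∀ γ ≥ (0:ℝ), ∀ ε ≥ (0:ℝ), IsSolODE φ ε γ (u γ ε))
    (t : ℝ) (ht : t ∈ Set.Icc (0:ℝ) 1) :
    ∃ L : ℝ → ℝ,
      (∀ ε ≥ (0:ℝ), Filter.Tendsto (fun γ => u γ ε t) (nhdsWithin 0 (Set.Ici 0)) (nhds (L ε))) ∧
      Filter.Tendsto L (nhdsWithin 0 (Set.Ici 0)) (nhds 0) := by
  have hnn : ∀ γ ≥ 0, ∀ ε ≥ 0, 0 ≤ u γ ε t := fun γ hγ ε hε => (hu γ hγ ε hε).2.1 t ht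
  have hsmall : ∀ δ > 0, ∃ η > 0, ∀ γ ∈ Ico 0 η, ∀ ε ∈ Ico 0 η, u γ ε t < δ := by
    intro δ hδ
    obtain ⟨η, hη, H⟩ := exists_pos_forall_isSolODE_lt hφc hφnn hφpos hφOsg hδ
    exact ⟨η, hη, fun γ hγ ε hε => H γ hγ ε hε _ (hu γ hγ.1 ε hε.1) t ht⟩
  have hu00 : u 0 0 t = 0 := by
    refine le_antisymm (le_of_forall_pos_lt_add fun δ hδ => ?_) (hnn 0 le_rfl 0 le_rfl)
    obtain ⟨η, hη, H⟩ := hsmall δ hδ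
    simpa using H 0 ⟨le_rfl, hη⟩ 0 ⟨le_rfl, hη⟩
  refine ⟨fun ε => u 0 ε t, fun ε hε => ?_, ?_⟩
  · rcases hε.eq_or_lt with rfl | hε
    · dsimp only
      rw [hu00]
      refine tendsto_nhdsGE_zero_of_forall_lt (fun γ hγ => hnn γ hγ 0 le_rfl) fun δ hδ => ?_
      obtain ⟨η, hη, H⟩ := hsmall δ hδ
      exact ⟨η, hη, fun γ hγ => H γ hγ 0 ⟨le_rfl, hη⟩⟩
    · exact tendsto_isSolODE_of_pos hφc hφnn hε (fun γ hγ => hu γ hγ ε hε.le) ht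
  · refine tendsto_nhdsGE_zero_of_forall_lt (fun ε hε => hnn 0 le_rfl ε hε) fun δ hδ => ?_
    obtain ⟨η, hη, H⟩ := hsmall δ hδ
    exact ⟨η, hη, H 0 ⟨le_rfl, hη⟩⟩

/-- for the unique solutions `u γ ε` of
`u t = γ + ∫ₜ¹ (φ (u s) + ε) ds`, the iterated limit
`lim_{ε→0} lim_{γ→0} u^{γ,ε}(t) = 0` holds for each fixed `t ∈ [0,1]`. -/
theorem stmt1 (φ : ℝ → ℝ) (a b : ℝ) (ha : 0 ≤ a) (hb : 0 ≤ b)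
    (hφc : ContinuousOn φ (Set.Ici 0)) (hφm : MonotoneOn φ (Set.Ici 0))
    (hφnn : ∀ x ≥ (0:ℝ), 0 ≤ φ x) (hφpos : ∀ x > (0:ℝ), 0 < φ x)
    (hφgrow : ∀ x ≥ (0:ℝ), φ x ≤ a * x + b) (hφOsg : OsgoodCondition φ)
    (u : ℝ → ℝ → ℝ → ℝ) (hu : ∀ γ ≥ (0:ℝ), ∀ ε ≥ (0:ℝ), IsSolODE φ ε γ (u γ ε))
    (t : ℝ) (ht : t ∈ Set.Icc (0:ℝ) 1) :
    ∃ L : ℝ → ℝ,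
      (∀ ε ≥ (0:ℝ), Filter.Tendsto (fun γ => u γ ε t) (nhdsWithin 0 (Set.Ici 0)) (nhds (L ε))) ∧
      Filter.Tendsto L (nhdsWithin 0 (Set.Ici 0)) (nhds 0) :=
  stmt1_general φ hφc hφnn hφpos hφOsg u hu t ht
end

section
/- Let h ∈ L¹([0,1]) with H(t) = ∫₀ᵗ h(s) ds, h ≥ 0. Define, for r ≥ 0, τ_r := inf{s : H(s) ≥ r} ∧ 1, and recursively π₀^r := τ_r, π_{2l−1}^r := inf{t > π_{2l−2}^r : ∃ s ∈ (t,1], H(t) = H(s)} ∧ 1, π_{2l}^r := inf{t > π_{2l−1}^r : ∀ s ∈ (t,1], H(t) < H(s)} ∧ 1. Then on each interval [π_{2l−1}^r, π_{2l}^r] with π_{2l−1}^r < π_{2l}^r, H is constant, and on each [π_{2l−2}^r, π_{2l−1}^r] with π_{2l−2}^r < π_{2l−1}^r, H is strictly increasing. -/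
open MeasureTheory Set

/-- for `H(t) = ∫₀ᵗ h(s) ds` with `h ≥ 0` integrable and the
recursively defined times `τ_r = inf{s : H(s) ≥ r} ∧ 1`,
`π_{2l+1} = inf{t > π_{2l} : ∃ s ∈ (t,1], H(t) = H(s)} ∧ 1`,
`π_{2l+2} = inf{t > π_{2l+1} : ∀ s ∈ (t,1], H(t) < H(s)} ∧ 1`
(infimum of the empty set taken as `1`), `H` is strictly increasing on each
nondegenerate `[π_{2l}, π_{2l+1}]` and constant on each nondegenerate
`[π_{2l+1}, π_{2l+2}]`. -/
theorem stmt8 (h : ℝ → ℝ) (hnn : ∀ s, 0 ≤ h s)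
    (hint : MeasureTheory.IntegrableOn h (Set.Icc 0 1))
    (H : ℝ → ℝ) (hH : ∀ t, H t = ∫ s in Set.Ioc (0:ℝ) t, h s)
    (r : ℝ) (hr : 0 ≤ r) (π : ℕ → ℝ)
    (hπ0 : π 0 = sInf (insert 1 {s ∈ Set.Icc (0:ℝ) 1 | r ≤ H s}))
    (hπodd : ∀ l : ℕ, π (2*l+1) =
      sInf (insert 1 {t ∈ Set.Icc (0:ℝ) 1 | π (2*l) < t ∧ ∃ s ∈ Set.Ioc t 1, H t = H s}))
    (hπeven : ∀ l : ℕ, π (2*l+2) =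
      sInf (insert 1 {t ∈ Set.Icc (0:ℝ) 1 | π (2*l+1) < t ∧ ∀ s ∈ Set.Ioc t 1, H t < H s})) :
    ∀ l : ℕ,
      (π (2*l) < π (2*l+1) → StrictMonoOn H (Set.Icc (π (2*l)) (π (2*l+1)))) ∧
      (π (2*l+1) < π (2*l+2) →
        ∀ u ∈ Set.Icc (π (2*l+1)) (π (2*l+2)), H u = H (π (2*l+1))) := by
  -- Continuity of the primitive on [0,1]
  have Hcont : ContinuousOn H (Set.Icc 0 1) := by
    have := intervalIntegral.continuousOn_primitive (f := h) (a := (0:ℝ)) (b := 1)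
      (μ := volume) hint
    exact this.congr fun x _ => (hH x)
  -- Monotonicity of H on (-∞, 1]
  have Hmono : ∀ x y : ℝ, x ≤ y → y ≤ 1 → H x ≤ H y := by
    intro x y hxy hy1
    rw [hH x, hH y]
    apply setIntegral_mono_set (hint.mono_set ?_) ?_ ?_
    · exact fun s hs => ⟨le_of_lt hs.1, le_trans hs.2 hy1⟩
    · exact Filter.Eventually.of_forall fun s => hnn s
    · exact Filter.Eventually.of_forall (Ioc_subset_Ioc_right hxy)
  -- Bounded below helper
  have hbdd' : ∀ S : Set ℝ, S ⊆ Icc 0 1 → BddBelow (insert (1:ℝ) S) := by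
    intro S hS
    refine ⟨0, fun x hx => ?_⟩
    rcases hx with rfl | hx
    · norm_num
    · exact (hS hx).1
  have key : ∀ S : Set ℝ, S ⊆ Icc 0 1 → sInf (insert 1 S) ∈ Icc (0:ℝ) 1 := by
    intro S hS
    constructor
    · refine le_csInf (insert_nonempty _ _) fun x hx => ?_
      rcases hx with rfl | hx
      · norm_num
      · exact (hS hx).1
    · exact csInf_le (hbdd' S hS) (mem_insert _ _)
  -- All the πₖ lie in [0,1]
  have hbound : ∀ k, π k ∈ Icc (0:ℝ) 1 := by
    intro k
    rcases Nat.even_or_odd k with ⟨m, hm⟩ | ⟨m, hm⟩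
    · rcases m with _ | l
      · have hk : k = 0 := by omega
        rw [hk, hπ0]
        exact key _ fun t ht => ht.1
      · have hk : k = 2*l+2 := by omega
        rw [hk, hπeven l]
        exact key _ fun t ht => ht.1
    · have hk : k = 2*m+1 := by omega
      rw [hk, hπodd m]
      exact key _ fun t ht => ht.1
  intro l
  have ha0 : (0:ℝ) ≤ π (2*l+1) := (hbound (2*l+1)).1
  have ha1 : π (2*l+1) ≤ 1 := (hbound (2*l+1)).2
  have hb1 : π (2*l+2) ≤ 1 := (hbound (2*l+2)).2
  have hp0 : (0:ℝ) ≤ π (2*l) := (hbound (2*l)).1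
  constructor
  · -- strictly increasing on [π(2l), π(2l+1)]
    intro _ x hx y hy hxy
    obtain ⟨t, hxt, hty⟩ := exists_between hxy
    have hy1 : y ≤ 1 := hy.2.trans ha1
    have ht1 : t < 1 := lt_of_lt_of_le hty hy1
    have ht0 : 0 ≤ t := le_trans (hp0.trans hx.1) hxt.le
    have htA : t ∉ insert (1:ℝ)
        {t ∈ Icc (0:ℝ) 1 | π (2*l) < t ∧ ∃ s ∈ Ioc t 1, H t = H s} := by
      intro hmem
      have h1 : sInf (insert (1:ℝ)
          {t ∈ Icc (0:ℝ) 1 | π (2*l) < t ∧ ∃ s ∈ Ioc t 1, H t = H s}) ≤ t :=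
        csInf_le (hbdd' _ fun u hu => hu.1) hmem
      rw [← hπodd l] at h1
      have : t < π (2*l+1) := lt_of_lt_of_le hty hy.2
      linarith
    have htne : ¬ ∃ s ∈ Ioc t 1, H t = H s := by
      intro hex
      exact htA (Or.inr ⟨⟨ht0, ht1.le⟩, lt_of_le_of_lt hx.1 hxt, hex⟩)
    have hne : H t ≠ H y := fun heq => htne ⟨y, ⟨hty, hy1⟩, heq⟩
    calc H x ≤ H t := Hmono x t hxt.le ht1.le
    _ < H y := lt_of_le_of_ne (Hmono t y hty.le hy1) hne
  · -- constant on [π(2l+1), π(2l+2)]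
    intro hlt
    -- Step 1: every point strictly between is the start of a flat piece
    have step1 : ∀ u, π (2*l+1) < u → u < π (2*l+2) → ∃ s ∈ Ioc u 1, H u = H s := by
      intro u hau hub
      by_contra hcon
      push_neg at hcon
      have humem : u ∈ insert (1:ℝ)
          {t ∈ Icc (0:ℝ) 1 | π (2*l+1) < t ∧ ∀ s ∈ Ioc t 1, H t < H s} := by
        refine Or.inr ⟨⟨ha0.trans hau.le, hub.le.trans hb1⟩, hau, fun s hs => ?_⟩
        exact lt_of_le_of_ne (Hmono u s hs.1.le hs.2) (hcon s hs)
      have h1 : sInf (insert (1:ℝ)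
          {t ∈ Icc (0:ℝ) 1 | π (2*l+1) < t ∧ ∀ s ∈ Ioc t 1, H t < H s}) ≤ u :=
        csInf_le (hbdd' _ fun t ht => ht.1) humem
      rw [← hπeven l] at h1
      linarith
    -- Step 2: H is constant equal to H(π(2l+2)) on the open interval
    have step2 : ∀ x, π (2*l+1) < x → x < π (2*l+2) → H x = H (π (2*l+2)) := by
      intro x hax hxb
      have hx1 : x ≤ 1 := hxb.le.trans hb1
      set S := {s ∈ Icc x (π (2*l+2)) | H s = H x} with hSdef
      have hxS : x ∈ S := ⟨⟨le_refl x, hxb.le⟩, rfl⟩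
      have hSne : S.Nonempty := ⟨x, hxS⟩
      have hSbdd : BddAbove S := ⟨π (2*l+2), fun s hs => hs.1.2⟩
      have hxc : x ≤ sSup S := le_csSup hSbdd hxS
      have hcb : sSup S ≤ π (2*l+2) := csSup_le hSne fun s hs => hs.1.2
      have hflat : ∀ s, x ≤ s → s < sSup S → H s = H x := by
        intro s hxs hsc
        obtain ⟨s', hs'S, hss'⟩ := exists_lt_of_lt_csSup hSne hsc
        have h1 : H x ≤ H s := Hmono x s hxs (le_trans (hsc.le.trans hcb) hb1)
        have h2 : H s ≤ H s' := Hmono s s' hss'.le (hs'S.1.2.trans hb1)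
        have h3 : H s' = H x := hs'S.2
        linarith
      have hc01 : sSup S ∈ Icc (0:ℝ) 1 :=
        ⟨le_trans (ha0.trans hax.le) hxc, hcb.trans hb1⟩
      have hHc : H (sSup S) = H x := by
        rcases eq_or_lt_of_le hxc with heq | hlt'
        · rw [← heq]
        · have hne : (nhdsWithin (sSup S) (Ico x (sSup S))).NeBot := by
            rw [← mem_closure_iff_nhdsWithin_neBot, closure_Ico hlt'.ne]
            exact ⟨hxc, le_refl _⟩
          haveI := hne
          have hsub : Ico x (sSup S) ⊆ Icc (0:ℝ) 1 := fun s hs =>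
            ⟨(ha0.trans hax.le).trans hs.1, (hs.2.le.trans hcb).trans hb1⟩
          have ht1 : Filter.Tendsto H (nhdsWithin (sSup S) (Ico x (sSup S)))
              (nhds (H (sSup S))) :=
            (Hcont _ hc01).mono_left (nhdsWithin_mono _ hsub)
          have ht2 : Filter.Tendsto H (nhdsWithin (sSup S) (Ico x (sSup S)))
              (nhds (H x)) := by
            apply Filter.Tendsto.congr' _ tendsto_const_nhds
            filter_upwards [self_mem_nhdsWithin] with s hs
            exact (hflat s hs.1 hs.2).symm
          exact tendsto_nhds_unique ht1 ht2
      rcases eq_or_lt_of_le hcb with hceq | hclt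
      · rw [← hceq]; exact hHc.symm
      · exfalso
        have hac : π (2*l+1) < sSup S := lt_of_lt_of_le hax hxc
        obtain ⟨s, hs, hHs⟩ := step1 (sSup S) hac hclt
        have hminS : min s (π (2*l+2)) ∈ S := by
          refine ⟨⟨hxc.trans (le_min hs.1.le hclt.le), min_le_right _ _⟩, ?_⟩
          have h1 : H (sSup S) ≤ H (min s (π (2*l+2))) :=
            Hmono _ _ (le_min hs.1.le hclt.le) ((min_le_right _ _).trans hb1)
          have h2 : H (min s (π (2*l+2))) ≤ H s :=
            Hmono _ _ (min_le_left _ _) hs.2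
          linarith
        have h4 : min s (π (2*l+2)) ≤ sSup S := le_csSup hSbdd hminS
        have h5 : sSup S < min s (π (2*l+2)) := lt_min hs.1 hclt
        linarith
    -- Step 3: the value extends to the left endpoint by continuity
    have hab' : H (π (2*l+1)) = H (π (2*l+2)) := by
      have hne : (nhdsWithin (π (2*l+1)) (Ioo (π (2*l+1)) (π (2*l+2)))).NeBot := by
        rw [← mem_closure_iff_nhdsWithin_neBot, closure_Ioo hlt.ne]
        exact ⟨le_refl _, hlt.le⟩
      haveI := hne
      have hsub : Ioo (π (2*l+1)) (π (2*l+2)) ⊆ Icc (0:ℝ) 1 := fun s hs =>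
        ⟨ha0.trans hs.1.le, hs.2.le.trans hb1⟩
      have ht1 : Filter.Tendsto H (nhdsWithin (π (2*l+1)) (Ioo (π (2*l+1)) (π (2*l+2))))
          (nhds (H (π (2*l+1)))) :=
        (Hcont _ ⟨ha0, ha1⟩).mono_left (nhdsWithin_mono _ hsub)
      have ht2 : Filter.Tendsto H (nhdsWithin (π (2*l+1)) (Ioo (π (2*l+1)) (π (2*l+2))))
          (nhds (H (π (2*l+2)))) := by
        apply Filter.Tendsto.congr' _ tendsto_const_nhds
        filter_upwards [self_mem_nhdsWithin] with s hs
        exact (step2 s hs.1 hs.2).symm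
      exact tendsto_nhds_unique ht1 ht2
    intro u hu
    rcases eq_or_lt_of_le hu.1 with heq | hau
    · rw [← heq]
    · rcases eq_or_lt_of_le hu.2 with heq | hub
      · rw [heq]; exact hab'.symm
      · rw [step2 u hau hub]; exact hab'.symm
end

section
/- Let Φ: [0,∞) → [0,∞) be continuous, non-decreasing, positive on (0,∞), of linear growth, with ∫₀₊ dx/Φ(x) = +∞. For ε > 0 let V^ε be the unique solution of V^ε(t) = 3∫ₜ¹ (Φ(V^ε(s)) + ε) ds on [0,1]. Then V^ε(t) → 0 as ε → 0, uniformly in t ∈ [0,1]. -/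
/-!
Separating variables in `V' = -3 (Φ V + ε)`, `V 1 = 0`, gives
`∫₀^{V t} dx / (3 (Φ x + ε)) = 1 - t ≤ 1` for every `t`. By the Osgood condition and monotone
convergence, `∫₀^η dx / (Φ x + ε) → ∞` as `ε → 0⁺` for each `η > 0`, so `V t < η` for all `t`
once `ε` is small.
-/

open MeasureTheory Set Filter Topology

open scoped ENNReal

section SeparationOfVariables

variable {q u : ℝ → ℝ} {s : Set ℝ} {a b : ℝ}

theorem hasDerivAt_of_eq_integral_comp (hq : ContinuousOn q s) (hu : ContinuousOn u (Icc a b))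
    (hus : MapsTo u (Icc a b) s) (h_eq : ∀ t ∈ Icc a b, u t = ∫ r in t..b, q (u r))
    {t : ℝ} (ht : t ∈ Ioo a b) : HasDerivAt u (-q (u t)) t := by
  have hG : ContinuousOn (fun r => q (u r)) (Icc a b) := hq.comp hu hus
  have h_nhds : Icc a b ∈ 𝓝 t := Icc_mem_nhds ht.1 ht.2
  refine (intervalIntegral.integral_hasDerivAt_left
    ((hG.mono (uIcc_subset_Icc (Ioo_subset_Icc_self ht) (right_mem_Icc.2 (ht.1.trans ht.2).le)))
      |>.intervalIntegrable)
    ((hG.mono Ioo_subset_Icc_self).stronglyMeasurableAtFilter isOpen_Ioo t ht)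
    (hG.continuousAt h_nhds)).congr_of_eventuallyEq ?_
  filter_upwards [h_nhds] with r hr using h_eq r hr

/-- Separation of variables for `u' = -q(u)`, `u b = 0`. -/
theorem integral_inv_eq_of_eq_integral_comp (hab : a ≤ b) (hq : ContinuousOn q s)
    (hq_pos : ∀ x ∈ s, 0 < q x) (hu : ContinuousOn u (Icc a b)) (hus : MapsTo u (Icc a b) s)
    (h_eq : ∀ t ∈ Icc a b, u t = ∫ r in t..b, q (u r)) :
    ∫ x in (0)..(u a), (q x)⁻¹ = b - a := by
  have h_subst := intervalIntegral.integral_comp_mul_deriv_of_deriv_nonpos (g := fun x => (q x)⁻¹)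
    (by rwa [uIcc_of_le hab])
    (fun t ht => by
      rw [min_eq_left hab, max_eq_right hab] at ht
      exact hasDerivAt_of_eq_integral_comp hq hu hus h_eq ht)
    (fun t ht => by
      rw [min_eq_left hab, max_eq_right hab] at ht
      exact neg_nonpos.2 (hq_pos _ (hus (Ioo_subset_Icc_self ht))).le)
  have h_one : EqOn (fun t => ((fun x => (q x)⁻¹) ∘ u) t * -q (u t)) (fun _ => -1) (uIcc a b) := by
    intro t ht
    rw [uIcc_of_le hab] at ht
    simp [inv_mul_cancel₀ (hq_pos _ (hus ht)).ne']
  have hub : u b = 0 := by simpa using h_eq b (right_mem_Icc.2 hab)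
  rw [intervalIntegral.integral_congr h_one, hub, intervalIntegral.integral_symm 0 (u a)] at h_subst
  simp only [intervalIntegral.integral_const, smul_eq_mul] at h_subst
  linarith

theorem lt_of_eq_integral_comp_of_lt_integral_inv {η : ℝ} (hab : a ≤ b) (hη : 0 ≤ η)
    (hq : ContinuousOn q (Ici 0)) (hq_pos : ∀ x ∈ Ici 0, 0 < q x) (hu : ContinuousOn u (Icc a b))
    (hu_nonneg : MapsTo u (Icc a b) (Ici 0)) (h_eq : ∀ t ∈ Icc a b, u t = ∫ r in t..b, q (u r))
    (h_lt : b - a < ∫ x in (0)..η, (q x)⁻¹) : u a < η := by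
  by_contra! h_le
  have h_sep := integral_inv_eq_of_eq_integral_comp hab hq hq_pos hu hu_nonneg h_eq
  have h_mono : ∫ x in (0)..η, (q x)⁻¹ ≤ ∫ x in (0)..(u a), (q x)⁻¹ := by
    refine intervalIntegral.integral_mono_interval le_rfl hη h_le ?_ ?_
    · filter_upwards [ae_restrict_mem measurableSet_Ioc] with x hx
      exact (inv_pos.2 (hq_pos x hx.1.le)).le
    · refine ContinuousOn.intervalIntegrable ((hq.inv₀ fun x hx => (hq_pos x hx).ne').mono ?_)
      rw [uIcc_of_le (hη.trans h_le)]
      exact Icc_subset_Ici_self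
  linarith

end SeparationOfVariables

section Osgood

variable {φ : ℝ → ℝ} {δ : ℝ}

theorem intervalIntegrable_inv_add (hφ : ContinuousOn φ (Icc 0 δ))
    (hφ_nonneg : ∀ x ∈ Icc 0 δ, 0 ≤ φ x) (hδ : 0 ≤ δ) {ε : ℝ} (hε : 0 < ε) :
    IntervalIntegrable (fun x => (φ x + ε)⁻¹) volume 0 δ := by
  refine ContinuousOn.intervalIntegrable ?_
  rw [uIcc_of_le hδ]
  exact (hφ.add continuousOn_const).inv₀ fun x hx =>
    (add_pos_of_nonneg_of_pos (hφ_nonneg x hx) hε).ne'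

theorem antitoneOn_integral_inv_add (hφ : ContinuousOn φ (Icc 0 δ))
    (hφ_nonneg : ∀ x ∈ Icc 0 δ, 0 ≤ φ x) (hδ : 0 ≤ δ) :
    AntitoneOn (fun ε => ∫ x in (0)..δ, (φ x + ε)⁻¹) (Ioi 0) := by
  intro ε hε ε' hε' hεε'
  refine intervalIntegral.integral_mono_on hδ (intervalIntegrable_inv_add hφ hφ_nonneg hδ hε')
    (intervalIntegrable_inv_add hφ hφ_nonneg hδ hε) fun x hx => ?_
  exact inv_anti₀ (add_pos_of_nonneg_of_pos (hφ_nonneg x hx) hε) (by linarith)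

/-- Monotone convergence as `ε ↓ 0`; where `φ x = 0` the Osgood integrand `1 / φ x` is `0`,
so it is still dominated by the limit. -/
theorem OsgoodCondition.exists_lt_integral_inv_add (hosg : OsgoodCondition φ) (hδ : 0 < δ)
    (hφ : ContinuousOn φ (Icc 0 δ)) (hφ_nonneg : ∀ x ∈ Icc 0 δ, 0 ≤ φ x) (M : ℝ) :
    ∃ ε > 0, M < ∫ x in (0)..δ, (φ x + ε)⁻¹ := by
  set μ := volume.restrict (Ioc 0 δ)
  set f : ℕ → ℝ → ℝ≥0∞ := fun n x => ENNReal.ofReal (φ x + 1 / ((n : ℝ) + 1))⁻¹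
  have h_mem : ∀ᵐ x ∂μ, x ∈ Icc 0 δ := by
    filter_upwards [ae_restrict_mem measurableSet_Ioc] with x hx using Ioc_subset_Icc_self hx
  have hf_meas : ∀ n, AEMeasurable (f n) μ := fun n =>
    ENNReal.measurable_ofReal.comp_aemeasurable
      (((hφ.mono Ioc_subset_Icc_self).aemeasurable measurableSet_Ioc).add_const _).inv
  have hf_mono : ∀ᵐ x ∂μ, Monotone fun n => f n x := by
    filter_upwards [h_mem] with x hx m n hmn
    exact ENNReal.ofReal_le_ofReal <| inv_anti₀ (by have := hφ_nonneg x hx; positivity) <|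
      add_le_add_right (Nat.one_div_le_one_div hmn) _
  have h_le_iSup : ∀ᵐ x ∂μ, ENNReal.ofReal (1 / φ x) ≤ ⨆ n, f n x := by
    filter_upwards [h_mem] with x hx
    rcases (hφ_nonneg x hx).eq_or_lt with h0 | hpos
    · simp [← h0]
    have h_lim : Tendsto (fun n => f n x) atTop (𝓝 (ENNReal.ofReal (1 / φ x))) := by
      refine ENNReal.continuous_ofReal.continuousAt.tendsto.comp ?_
      simpa [one_div] using
        ((tendsto_const_nhds (x := φ x)).add tendsto_one_div_add_atTop_nhds_zero_nat).inv₀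
          (by simpa using hpos.ne')
    exact le_of_tendsto' h_lim fun n => le_iSup (fun n => f n x) n
  have h_iSup : ⨆ n, ∫⁻ x, f n x ∂μ = ⊤ := by
    rw [← lintegral_iSup' hf_meas hf_mono, eq_top_iff, ← hosg δ hδ]
    exact lintegral_mono_ae h_le_iSup
  obtain ⟨n, hn⟩ := lt_iSup_iff.1 (h_iSup ▸ ENNReal.ofReal_lt_top (r := M))
  have hεn : (0 : ℝ) < 1 / ((n : ℝ) + 1) := by positivity
  refine ⟨_, hεn, ?_⟩
  have h_int := (intervalIntegrable_iff_integrableOn_Ioc_of_le hδ.le).1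
    (intervalIntegrable_inv_add hφ hφ_nonneg hδ.le hεn)
  rw [intervalIntegral.integral_of_le hδ.le]
  rw [← ofReal_integral_eq_lintegral_ofReal h_int] at hn
  · exact (ENNReal.ofReal_lt_ofReal_iff'.1 hn).1
  · filter_upwards [h_mem] with x hx
    have := hφ_nonneg x hx
    positivity

theorem OsgoodCondition.tendsto_integral_inv_add (hosg : OsgoodCondition φ) (hδ : 0 < δ)
    (hφ : ContinuousOn φ (Icc 0 δ)) (hφ_nonneg : ∀ x ∈ Icc 0 δ, 0 ≤ φ x) :
    Tendsto (fun ε => ∫ x in (0)..δ, (φ x + ε)⁻¹) (𝓝[>] 0) atTop := by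
  refine tendsto_atTop.2 fun M => ?_
  obtain ⟨ε₀, hε₀, hM⟩ := hosg.exists_lt_integral_inv_add hδ hφ hφ_nonneg M
  filter_upwards [Ioc_mem_nhdsGT hε₀] with ε hε
  exact hM.le.trans (antitoneOn_integral_inv_add hφ hφ_nonneg hδ.le hε.1 hε₀ hε.2)

end Osgood

theorem stmt16_general (Φ : ℝ → ℝ)
    (hΦc : ContinuousOn Φ (Set.Ici 0))
    (hΦnn : ∀ x ≥ (0:ℝ), 0 ≤ Φ x) (hΦOsg : OsgoodCondition Φ)
    (V : ℝ → ℝ → ℝ)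
    (hV : ∀ ε > (0:ℝ), ContinuousOn (V ε) (Set.Icc 0 1) ∧
      (∀ t ∈ Set.Icc (0:ℝ) 1, 0 ≤ V ε t) ∧
      ∀ t ∈ Set.Icc (0:ℝ) 1, V ε t = 3 * ∫ s in Set.Ioc t 1, (Φ (V ε s) + ε)) :
    TendstoUniformlyOn (fun ε t => V ε t) (fun _ => 0)
      (nhdsWithin 0 (Set.Ioi 0)) (Set.Icc 0 1) := by
  rw [Metric.tendstoUniformlyOn_iff]
  intro η hη
  have h_large : ∀ᶠ ε in 𝓝[>] 0, 3 < ∫ x in (0)..η, (Φ x + ε)⁻¹ :=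
    (hΦOsg.tendsto_integral_inv_add hη (hΦc.mono Icc_subset_Ici_self)
      fun x hx => hΦnn x hx.1).eventually_gt_atTop 3
  filter_upwards [h_large, self_mem_nhdsWithin] with ε hε_large hε t ht
  obtain ⟨hVc, hV_nonneg, hV_eq⟩ := hV ε hε
  rw [Real.dist_eq, zero_sub, abs_neg, abs_of_nonneg (hV_nonneg t ht)]
  refine lt_of_eq_integral_comp_of_lt_integral_inv (q := fun y => 3 * (Φ y + ε)) ht.2 hη.le
    (continuousOn_const.mul (hΦc.add continuousOn_const))
    (fun x hx => mul_pos three_pos (add_pos_of_nonneg_of_pos (hΦnn x hx) hε))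
    (hVc.mono (Icc_subset_Icc_left ht.1))
    (fun s hs => hV_nonneg s ⟨ht.1.trans hs.1, hs.2⟩) (fun s hs => ?_) ?_
  · rw [hV_eq s ⟨ht.1.trans hs.1, hs.2⟩, intervalIntegral.integral_of_le hs.2, integral_const_mul]
  · simp only [mul_inv, intervalIntegral.integral_const_mul]
    linarith [ht.1]

/-- the solutions `V^ε` of `V^ε(t) = 3∫ₜ¹ (Φ(V^ε(s)) + ε) ds` tend
to `0` uniformly on `[0,1]` as `ε → 0⁺`. -/
theorem stmt16 (Φ : ℝ → ℝ) (a b : ℝ) (ha : 0 ≤ a) (hb : 0 ≤ b)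
    (hΦc : ContinuousOn Φ (Set.Ici 0)) (hΦm : MonotoneOn Φ (Set.Ici 0))
    (hΦnn : ∀ x ≥ (0:ℝ), 0 ≤ Φ x) (hΦpos : ∀ x > (0:ℝ), 0 < Φ x)
    (hΦgrow : ∀ x ≥ (0:ℝ), Φ x ≤ a * x + b) (hΦOsg : OsgoodCondition Φ)
    (V : ℝ → ℝ → ℝ)
    (hV : ∀ ε > (0:ℝ), ContinuousOn (V ε) (Set.Icc 0 1) ∧
      (∀ t ∈ Set.Icc (0:ℝ) 1, 0 ≤ V ε t) ∧
      ∀ t ∈ Set.Icc (0:ℝ) 1, V ε t = 3 * ∫ s in Set.Ioc t 1, (Φ (V ε s) + ε)) :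
    TendstoUniformlyOn (fun ε t => V ε t) (fun _ => 0)
      (nhdsWithin 0 (Set.Ioi 0)) (Set.Icc 0 1) :=
  stmt16_general Φ hΦc hΦnn hΦOsg V hV
end
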